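/- arXiv:1809.06734 — 2 statements merged into one kernel-verified Lean document; each statement's English description precedes it below -/
import Mathlib

section
/- For every x with |x| > 1, the function y ↦ U(x,y)/(y−1)^{αρ} tends to v₁(x)/c_{αρ} as y → 1 from the right. -/
/-!
Write `I(t) = ∫₁ᵗ ψ_{αρ̂}`. Since `ψ_{αρ̂}(u) = (u-1)^{αρ-1} g(u)` with `g(u) = (u+1)^{αρ̂-1}`
continuous at `1`, `I(t) ∼ g(1) (t-1)^{αρ} / (αρ)` as `t → 1⁺`. For `|x| > 1` and `y` close to `1`,
`z(x,y) - 1 = (y-1) |x+1| / |x-y|`, so `z(x,y) → 1⁺` and `I(z(x,y)) / (y-1)^{αρ}` tends to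
`g(1) / (αρ) · (|x+1| / |x-1|)^{αρ}`. Both terms of `U(x,y) / (y-1)^{αρ}` therefore converge, and
the reflection formula `Γ(αρ̂) Γ(1-αρ̂) = π / sin(παρ̂)` turns the prefactor of the limit into
`sin(παρ̂) / c_{αρ}`.
-/

open Real MeasureTheory Set Filter intervalIntegral
open scoped Topology

/-- `ψ_{αρ}(u) = (u−1)^{αρ̂−1}(u+1)^{αρ−1}` where `ρ̂ = 1 − ρ`. -/
noncomputable def psiRho (α ρ : ℝ) (u : ℝ) : ℝ :=
  (u - 1) ^ (α * (1 - ρ) - 1) * (u + 1) ^ (α * ρ - 1)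

/-- `ψ_{αρ̂}(u) = (u−1)^{αρ−1}(u+1)^{αρ̂−1}` where `ρ̂ = 1 − ρ`. -/
noncomputable def psiRhoHat (α ρ : ℝ) (u : ℝ) : ℝ :=
  (u - 1) ^ (α * ρ - 1) * (u + 1) ^ (α * (1 - ρ) - 1)

/-- `g(y) = (y−1)^{αρ}(y+1)^{αρ̂−1}`. -/
noncomputable def gfun (α ρ : ℝ) (y : ℝ) : ℝ :=
  (y - 1) ^ (α * ρ) * (y + 1) ^ (α * (1 - ρ) - 1)

/-- `z(x,y) = |xy−1|/|x−y|`. -/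
noncomputable def zfun (x y : ℝ) : ℝ := |x * y - 1| / |x - y|

/-- `c_{αρ} = 2^{αρ}·π·αρ·Γ(αρ)/Γ(1−αρ̂)`. -/
noncomputable def cRho (α ρ : ℝ) : ℝ :=
  2 ^ (α * ρ) * π * (α * ρ) * Real.Gamma (α * ρ) / Real.Gamma (1 - α * (1 - ρ))

/-- The harmonic function `v₁` (defined piecewise for `x > 1` and `x < −1`). -/
noncomputable def v1fun (α ρ : ℝ) (x : ℝ) : ℝ :=
  if 1 < x then
    Real.sin (π * (α * (1 - ρ))) *
      ((x + 1) * psiRho α ρ x - max (α - 1) 0 * ∫ u in (1:ℝ)..x, psiRho α ρ u)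
  else
    Real.sin (π * (α * ρ)) *
      ((|x| - 1) * psiRhoHat α ρ |x| - max (α - 1) 0 * ∫ u in (1:ℝ)..|x|, psiRhoHat α ρ u)

/-- The explicit Profeta–Simon Green function `U(x,y)` (for `x > y > 1` resp. `x < −1 < 1 < y`). -/
noncomputable def Ufun (α ρ : ℝ) (x y : ℝ) : ℝ :=
  if 1 < x then
    (2 ^ (1 - α) / (Real.Gamma (α * ρ) * Real.Gamma (α * (1 - ρ)))) *
      ((x - y) ^ (α - 1) * (∫ u in (1:ℝ)..zfun x y, psiRhoHat α ρ u)
        - max (α - 1) 0 * (∫ u in (1:ℝ)..y, psiRhoHat α ρ u) * ∫ u in (1:ℝ)..x, psiRho α ρ u)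
  else
    (Real.sin (π * (α * ρ)) / Real.sin (π * (α * (1 - ρ)))) *
    (2 ^ (1 - α) / (Real.Gamma (α * ρ) * Real.Gamma (α * (1 - ρ)))) *
      ((y - x) ^ (α - 1) * (∫ u in (1:ℝ)..zfun x y, psiRhoHat α ρ u)
        - max (α - 1) 0 * (∫ u in (1:ℝ)..y, psiRhoHat α ρ u) * ∫ u in (1:ℝ)..|x|, psiRhoHat α ρ u)

lemma intervalIntegrable_sub_rpow {a r : ℝ} (hr : -1 < r) (z : ℝ) :
    IntervalIntegrable (fun u => (u - a) ^ r) volume a z := by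
  simpa using (intervalIntegrable_rpow' (a := 0) (b := z - a) hr).comp_sub_right a

lemma integral_sub_rpow {a p : ℝ} (hp : 0 < p) (z : ℝ) :
    ∫ u in a..z, (u - a) ^ (p - 1) = (z - a) ^ p / p := by
  rw [integral_comp_sub_right (fun u => u ^ (p - 1)), integral_rpow (Or.inl (by linarith)),
    sub_self, zero_rpow (by simpa using hp.ne')]
  simp

theorem tendsto_integral_sub_rpow_mul_div {a p : ℝ} (hp : 0 < p) {g : ℝ → ℝ}
    (hg : ContinuousOn g (Ici a)) :
    Tendsto (fun z => (∫ u in a..z, (u - a) ^ (p - 1) * g u) / (z - a) ^ p) (𝓝[>] a)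
      (𝓝 (g a / p)) := by
  rw [Metric.tendsto_nhds]
  intro ε hε
  have hnear : ∀ᶠ u in 𝓝[≥] a, dist (g u) (g a) < ε * p / 2 :=
    Metric.tendsto_nhds.1 (hg.continuousWithinAt self_mem_Ici) _ (by positivity)
  obtain ⟨b, hab, hb⟩ := mem_nhdsGE_iff_exists_Ico_subset.1 hnear
  filter_upwards [Ioo_mem_nhdsGT hab] with z ⟨haz, hzb⟩
  have hza : 0 < (z - a) ^ p := rpow_pos_of_pos (sub_pos.2 haz) p
  have hpow := intervalIntegrable_sub_rpow (a := a) (by linarith : -1 < p - 1) z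
  have hgz : ContinuousOn g (uIcc a z) := hg.mono (by simp [uIcc_of_le haz.le, Icc_subset_Ici_self])
  have hdiff : (∫ u in a..z, (u - a) ^ (p - 1) * g u) - g a / p * (z - a) ^ p
      = ∫ u in a..z, (u - a) ^ (p - 1) * (g u - g a) := by
    simp_rw [mul_sub]
    rw [integral_sub (hpow.mul_continuousOn hgz) (hpow.mul_const _),
      intervalIntegral.integral_mul_const, integral_sub_rpow hp]
    ring
  have hbound : ‖∫ u in a..z, (u - a) ^ (p - 1) * (g u - g a)‖
      ≤ ∫ u in a..z, (u - a) ^ (p - 1) * (ε * p / 2) := by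
    refine norm_integral_le_of_norm_le haz.le (ae_of_all _ fun u hu => ?_) (hpow.mul_const _)
    have hu0 : 0 ≤ (u - a) ^ (p - 1) := rpow_nonneg (by linarith [hu.1]) _
    rw [norm_mul, Real.norm_of_nonneg hu0]
    exact mul_le_mul_of_nonneg_left (hb ⟨hu.1.le, hu.2.trans_lt hzb⟩).le hu0
  rw [intervalIntegral.integral_mul_const, integral_sub_rpow hp, ← hdiff, Real.norm_eq_abs]
    at hbound
  have hquot : (∫ u in a..z, (u - a) ^ (p - 1) * g u) / (z - a) ^ p - g a / p
      = ((∫ u in a..z, (u - a) ^ (p - 1) * g u) - g a / p * (z - a) ^ p) / (z - a) ^ p := by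
    field_simp
  rw [dist_eq_norm, Real.norm_eq_abs, hquot, abs_div, abs_of_pos hza, div_lt_iff₀ hza]
  calc _ ≤ (z - a) ^ p / p * (ε * p / 2) := hbound
    _ < ε * (z - a) ^ p := by field_simp; linarith

lemma rpow_mul_div_rpow_eq (α ρ : ℝ) {a b : ℝ} (ha : 0 < a) (hb : 0 < b) :
    b ^ (α - 1) * (a / b) ^ (α * ρ) = a * (a ^ (α * ρ - 1) * b ^ (α * (1 - ρ) - 1)) := by
  have hb' : b ^ (α - 1) = b ^ (α * (1 - ρ) - 1) * b ^ (α * ρ) := by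
    rw [← rpow_add hb]
    ring_nf
  have ha' : a ^ (α * ρ) = a * a ^ (α * ρ - 1) := by
    rw [rpow_sub_one ha.ne']
    field_simp
  rw [div_rpow ha.le hb.le, hb', ha']
  field_simp

lemma abs_sub_pos_of_abs_lt {x y : ℝ} (h : |y| < |x|) : 0 < |x - y| :=
  abs_pos.2 (sub_ne_zero.2 (by rintro rfl; exact lt_irrefl _ h))

lemma abs_add_one_pos {x : ℝ} (hx : 1 < |x|) : 0 < |x + 1| := by
  simpa using abs_sub_pos_of_abs_lt (x := x) (y := -1) (by simpa using hx)

lemma zfun_sub_one {x y : ℝ} (hy : 1 < y) (hyx : y < |x|) :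
    zfun x y - 1 = (y - 1) * (|x + 1| / |x - y|) := by
  rcases lt_abs.1 hyx with hxy | hxy
  · rw [zfun, abs_of_pos (by nlinarith : 0 < x * y - 1), abs_of_pos (by linarith : 0 < x + 1),
      abs_of_pos (by linarith : 0 < x - y)]
    field_simp
    ring
  · have hxy' : x - y < 0 := by linarith
    rw [zfun, abs_of_neg (by nlinarith : x * y - 1 < 0), abs_of_neg (by linarith : x + 1 < 0),
      abs_of_neg hxy']
    field_simp [hxy'.ne]
    ring

lemma tendsto_zfun_nhdsGT {x : ℝ} (hx : 1 < |x|) : Tendsto (zfun x) (𝓝[>] 1) (𝓝[>] 1) := by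
  have hx1 : |x - 1| ≠ 0 := (abs_sub_pos_of_abs_lt (by simpa using hx)).ne'
  have hcont : ContinuousAt (fun y => 1 + (y - 1) * (|x + 1| / |x - y|)) 1 := by
    fun_prop (disch := exact hx1)
  have hlim : Tendsto (fun y => 1 + (y - 1) * (|x + 1| / |x - y|)) (𝓝[>] 1) (𝓝 1) := by
    simpa using hcont.tendsto.mono_left nhdsWithin_le_nhds
  have hzeq : ∀ᶠ y in 𝓝[>] 1, 1 + (y - 1) * (|x + 1| / |x - y|) = zfun x y := by
    filter_upwards [Ioo_mem_nhdsGT hx] with y ⟨hy, hyx⟩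
    rw [← zfun_sub_one hy hyx]
    ring
  refine tendsto_nhdsWithin_iff.2 ⟨hlim.congr' hzeq, ?_⟩
  filter_upwards [Ioo_mem_nhdsGT hx] with y ⟨hy, hyx⟩
  have hxy : 0 < |x - y| := abs_sub_pos_of_abs_lt (by rwa [abs_of_pos (by linarith)])
  rw [mem_Ioi, ← sub_pos, zfun_sub_one hy hyx]
  exact mul_pos (sub_pos.2 hy) (div_pos (abs_add_one_pos hx) hxy)

lemma tendsto_integral_psiRhoHat_div {α ρ : ℝ} (hp : 0 < α * ρ) :
    Tendsto (fun y => (∫ u in (1:ℝ)..y, psiRhoHat α ρ u) / (y - 1) ^ (α * ρ)) (𝓝[>] 1)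
      (𝓝 (2 ^ (α * (1 - ρ) - 1) / (α * ρ))) := by
  have hg : ContinuousOn (fun u : ℝ => (u + 1) ^ (α * (1 - ρ) - 1)) (Ici 1) :=
    ContinuousOn.rpow_const (by fun_prop) fun u hu =>
      Or.inl (ne_of_gt (by linarith [mem_Ici.1 hu]))
  simpa [psiRhoHat, one_add_one_eq_two] using tendsto_integral_sub_rpow_mul_div hp hg

-- Both branches of `Ufun` have this shape for `1 < y < |x|`, with different `A` and `K`.
lemma tendsto_Ufun_div {α ρ x A K : ℝ} (hp : 0 < α * ρ) (hx : 1 < |x|)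
    (hU : ∀ y, 1 < y → y < |x| → Ufun α ρ x y = A * (|x - y| ^ (α - 1) *
      (∫ u in (1:ℝ)..zfun x y, psiRhoHat α ρ u) -
        max (α - 1) 0 * (∫ u in (1:ℝ)..y, psiRhoHat α ρ u) * K)) :
    Tendsto (fun y => Ufun α ρ x y / (y - 1) ^ (α * ρ)) (𝓝[>] 1)
      (𝓝 (A * (2 ^ (α * (1 - ρ) - 1) / (α * ρ)) *
        (|x - 1| ^ (α - 1) * (|x + 1| / |x - 1|) ^ (α * ρ) - max (α - 1) 0 * K))) := by
  have hI := tendsto_integral_psiRhoHat_div hp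
  have hIz := hI.comp (tendsto_zfun_nhdsGT hx)
  have hx1 : |x - 1| ≠ 0 := (abs_sub_pos_of_abs_lt (by simpa using hx)).ne'
  have hdist : Tendsto (fun y => |x - y|) (𝓝[>] 1) (𝓝 |x - 1|) :=
    (Continuous.tendsto (by fun_prop) 1).mono_left nhdsWithin_le_nhds
  have hlim := (((hdist.rpow_const (p := α - 1) (Or.inl hx1)).mul hIz).mul
    ((tendsto_const_nhds (x := |x + 1|).div hdist hx1).rpow_const (Or.inr hp.le))).sub
    ((hI.const_mul (max (α - 1) 0)).mul_const K) |>.const_mul A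
  have heq : ∀ᶠ y in 𝓝[>] 1, A * (|x - y| ^ (α - 1) *
      ((∫ u in (1:ℝ)..zfun x y, psiRhoHat α ρ u) / (zfun x y - 1) ^ (α * ρ)) *
      (|x + 1| / |x - y|) ^ (α * ρ) -
        max (α - 1) 0 * ((∫ u in (1:ℝ)..y, psiRhoHat α ρ u) / (y - 1) ^ (α * ρ)) * K)
      = Ufun α ρ x y / (y - 1) ^ (α * ρ) := by
    filter_upwards [Ioo_mem_nhdsGT hx] with y ⟨hy, hyx⟩
    have hxy : 0 < |x - y| := abs_sub_pos_of_abs_lt (by rwa [abs_of_pos (by linarith)])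
    have hy1 : 0 < (y - 1) ^ (α * ρ) := rpow_pos_of_pos (sub_pos.2 hy) _
    have hr : 0 < (|x + 1| / |x - y|) ^ (α * ρ) :=
      rpow_pos_of_pos (div_pos (abs_add_one_pos hx) hxy) _
    rw [zfun_sub_one hy hyx, mul_rpow (sub_pos.2 hy).le (by positivity), hU y hy hyx]
    field_simp
  convert hlim.congr' heq using 2
  ring

lemma sin_div_cRho {α ρ : ℝ} (hp : 0 < α * ρ) (hs : 0 < α * (1 - ρ)) (hs1 : α * (1 - ρ) < 1) :
    sin (π * (α * (1 - ρ))) / cRho α ρ =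
      2 ^ (1 - α) / (Gamma (α * ρ) * Gamma (α * (1 - ρ))) * (2 ^ (α * (1 - ρ) - 1) / (α * ρ)) := by
  have htwo : (2:ℝ) ^ (1 - α) * 2 ^ (α * (1 - ρ) - 1) * 2 ^ (α * ρ) = 1 := by
    rw [← rpow_add two_pos, ← rpow_add two_pos]
    ring_nf
    simp
  rw [cRho]
  generalize α * (1 - ρ) = s at *
  have hsin : 0 < sin (π * s) := sin_pos_of_pos_of_lt_pi (by positivity) (by nlinarith [pi_pos])
  have hrefl : sin (π * s) * (Gamma s * Gamma (1 - s)) = π := by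
    rw [Gamma_mul_Gamma_one_sub]
    field_simp
  have := Gamma_pos_of_pos hp
  have := Gamma_pos_of_pos hs
  have := Gamma_pos_of_pos (sub_pos.2 hs1)
  field_simp
  linear_combination (hrefl - π * htwo) / (α * ρ)

theorem tendsto_Ufun_div_of_one_lt {α ρ x : ℝ} (hp : 0 < α * ρ) (hs : 0 < α * (1 - ρ))
    (hs1 : α * (1 - ρ) < 1) (hx : 1 < x) :
    Tendsto (fun y => Ufun α ρ x y / (y - 1) ^ (α * ρ)) (𝓝[>] 1) (𝓝 (v1fun α ρ x / cRho α ρ)) := by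
  have habs : |x| = x := abs_of_pos (by linarith)
  have h := tendsto_Ufun_div (A := 2 ^ (1 - α) / (Gamma (α * ρ) * Gamma (α * (1 - ρ))))
    (K := ∫ u in (1:ℝ)..x, psiRho α ρ u) hp (habs ▸ hx) fun y _ hyx => by
      rw [Ufun, if_pos hx, abs_of_pos (by linarith)]
  convert h using 2
  rw [v1fun, if_pos hx, abs_of_pos (by linarith : 0 < x - 1), abs_of_pos (by linarith : 0 < x + 1),
    rpow_mul_div_rpow_eq α ρ (by linarith) (by linarith), ← sin_div_cRho hp hs hs1, psiRho]
  ring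

theorem tendsto_Ufun_div_of_lt_neg_one {α ρ x : ℝ} (hp : 0 < α * ρ) (hs : 0 < α * (1 - ρ))
    (hs1 : α * (1 - ρ) < 1) (hx : x < -1) :
    Tendsto (fun y => Ufun α ρ x y / (y - 1) ^ (α * ρ)) (𝓝[>] 1) (𝓝 (v1fun α ρ x / cRho α ρ)) := by
  have habs : |x| = -x := abs_of_neg (by linarith)
  have hsub : |x - 1| = |x| + 1 := by rw [habs, abs_of_neg (by linarith)]; ring
  have hadd : |x + 1| = |x| - 1 := by rw [habs, abs_of_neg (by linarith)]; ring
  have h := tendsto_Ufun_div (A := sin (π * (α * ρ)) / sin (π * (α * (1 - ρ))) *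
      (2 ^ (1 - α) / (Gamma (α * ρ) * Gamma (α * (1 - ρ)))))
    (K := ∫ u in (1:ℝ)..|x|, psiRhoHat α ρ u) hp (by rw [habs]; linarith) fun y hy _ => by
      rw [Ufun, if_neg (by linarith), abs_of_neg (by linarith : x - y < 0), neg_sub]
  have hsin : 0 < sin (π * (α * (1 - ρ))) :=
    sin_pos_of_pos_of_lt_pi (by positivity) (by nlinarith [pi_pos])
  convert h using 2
  rw [v1fun, if_neg (by linarith), hsub, hadd,
    rpow_mul_div_rpow_eq α ρ (by linarith) (by linarith), mul_assoc (sin _ / _),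
    ← sin_div_cRho hp hs hs1, div_mul_div_cancel₀ hsin.ne', psiRhoHat]
  ring

theorem stmt_3_general (α ρ : ℝ) (hα0 : 0 < α) (hρ0 : 0 < ρ) (hρ1 : ρ < 1)
    (hαρh : α * (1 - ρ) < 1)
    (x : ℝ) (hx : 1 < |x|) :
    Tendsto (fun y : ℝ => Ufun α ρ x y / (y - 1) ^ (α * ρ))
      (𝓝[>] (1:ℝ)) (𝓝 (v1fun α ρ x / cRho α ρ)) := by
  have hp : 0 < α * ρ := mul_pos hα0 hρ0
  have hs : 0 < α * (1 - ρ) := mul_pos hα0 (sub_pos.2 hρ1)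
  rcases lt_abs.1 hx with hx | hx
  · exact tendsto_Ufun_div_of_one_lt hp hs hαρh hx
  · exact tendsto_Ufun_div_of_lt_neg_one hp hs hαρh (by linarith)

/-- Corollary 3.2: `U(x,y)/(y−1)^{αρ} → v₁(x)/c_{αρ}` as `y → 1⁺`, for every `|x| > 1`. -/
theorem stmt_3 (α ρ : ℝ) (hα0 : 0 < α) (hα2 : α < 2) (hρ0 : 0 < ρ) (hρ1 : ρ < 1)
    (hαρ : α * ρ < 1) (hαρh : α * (1 - ρ) < 1)
    (x : ℝ) (hx : 1 < |x|) :
    Tendsto (fun y : ℝ => Ufun α ρ x y / (y - 1) ^ (α * ρ))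
      (𝓝[>] (1:ℝ)) (𝓝 (v1fun α ρ x / cRho α ρ)) :=
  stmt_3_general α ρ hα0 hρ0 hρ1 hαρh x hx
end

section
/- Suppose in addition α ∈ [1,2). For every x > 1, the function ε ↦ ε^{αρ̂−1}·[ (x/(1+ε)+1)^{αρ}·(x/(1+ε)−1)^{αρ̂}·∫_{1/(1+ε)}^1 (1+s)^{−αρ}(1−s)^{−αρ̂}·(x/(1+ε) − s)^{−1} ds − (α−1)·(∫₁^{x/(1+ε)} ψ_{αρ}(u) du)·∫_{1/(1+ε)}^1 (1+s)^{−αρ}(1−s)^{−αρ̂} ds ] tends to (2^{−αρ}/(1−αρ̂))·[ (x+1)·ψ_{αρ}(x) − (α−1)·∫₁^x ψ_{αρ}(u) du ] as ε → 0 from the right. -/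
open Real MeasureTheory Set Filter intervalIntegral
open scoped Topology

/-! Both integrals concentrate at `s = 1`: on `[1/(1+ε), 1]` the weight `ε^{αρ̂-1}(1-s)^{-αρ̂}`
has total mass `(1+ε)^{αρ̂-1}/(1-αρ̂) → 1/(1-αρ̂)`, so integrating it against a function of
`(ε, s)` that is continuous at `(0, 1)` gives that function's value there divided by `1-αρ̂`.
All other factors converge by continuity, and `(x+1)ψ_{αρ}(x) = (x+1)^{αρ}(x-1)^{αρ̂}/(x-1)`. -/

noncomputable def edgeAverage (β ε : ℝ) (f : ℝ → ℝ) : ℝ :=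
  ε ^ (β - 1) * ∫ s in (1 / (1 + ε))..1, (1 - s) ^ (-β) * f s

section edgeAverage

variable {β : ℝ}

lemma intervalIntegrable_one_sub_rpow_neg (hβ : β < 1) (a : ℝ) :
    IntervalIntegrable (fun s => (1 - s) ^ (-β)) volume a 1 := by
  simpa using (intervalIntegrable_rpow' (a := 1 - a) (b := 0)
    (show (-1 : ℝ) < -β by linarith)).comp_sub_left 1

lemma integral_one_sub_rpow_neg (hβ : β < 1) (a : ℝ) :
    ∫ s in a..1, (1 - s) ^ (-β) = (1 - a) ^ (1 - β) / (1 - β) := by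
  rw [intervalIntegral.integral_comp_sub_left (fun s => s ^ (-β)) 1,
    integral_rpow (Or.inl (by linarith)), sub_self,
    zero_rpow (by linarith), sub_zero, neg_add_eq_sub]

lemma edgeAverage_const (hβ : β < 1) {ε : ℝ} (hε : 0 < ε) (c : ℝ) :
    edgeAverage β ε (fun _ => c) = c * ((1 + ε) ^ (β - 1) / (1 - β)) := by
  have h1ε : 0 < 1 + ε := by linarith
  have hgap : 1 - 1 / (1 + ε) = ε / (1 + ε) := by field_simp; ring
  have hpow : ε ^ (1 - β) ≠ 0 := (rpow_pos_of_pos hε _).ne'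
  rw [edgeAverage, intervalIntegral.integral_mul_const, integral_one_sub_rpow_neg hβ, hgap,
    div_rpow hε.le h1ε.le, show β - 1 = -(1 - β) by ring, rpow_neg hε.le, rpow_neg h1ε.le]
  field_simp

lemma edgeAverage_mono (hβ : β < 1) {ε : ℝ} (hε : 0 < ε) {f g : ℝ → ℝ}
    (hf : ContinuousOn f (Icc (1 / (1 + ε)) 1)) (hg : ContinuousOn g (Icc (1 / (1 + ε)) 1))
    (hfg : ∀ s ∈ Icc (1 / (1 + ε)) 1, f s ≤ g s) :
    edgeAverage β ε f ≤ edgeAverage β ε g := by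
  have ha : 1 / (1 + ε) ≤ 1 := by rw [div_le_one (by linarith)]; linarith
  have hw := intervalIntegrable_one_sub_rpow_neg hβ (1 / (1 + ε))
  refine mul_le_mul_of_nonneg_left (integral_mono_on ha ?_ ?_ fun s hs => ?_) (rpow_nonneg hε.le _)
  · exact hw.mul_continuousOn (by rwa [uIcc_of_le ha])
  · exact hw.mul_continuousOn (by rwa [uIcc_of_le ha])
  · exact mul_le_mul_of_nonneg_left (hfg s hs) (rpow_nonneg (by linarith [hs.2]) _)

lemma eventually_forall_Icc_of_eventually_nhds {p : ℝ × ℝ → Prop}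
    (hp : ∀ᶠ q in 𝓝 ((0 : ℝ), (1 : ℝ)), p q) :
    ∀ᶠ ε in 𝓝[>] (0 : ℝ), ∀ s ∈ Icc (1 / (1 + ε)) 1, p (ε, s) := by
  obtain ⟨r, hr, hball⟩ := Metric.eventually_nhds_iff.1 hp
  filter_upwards [Ioo_mem_nhdsGT hr] with ε ⟨hε0, hεr⟩ s ⟨hs1, hs2⟩
  have h1ε : 1 - ε ≤ 1 / (1 + ε) := by
    rw [le_div_iff₀ (by linarith)]; nlinarith
  apply hball
  rw [Prod.dist_eq, Real.dist_eq, Real.dist_eq, max_lt_iff, abs_sub_lt_iff, abs_sub_lt_iff]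
  dsimp only
  refine ⟨⟨?_, ?_⟩, ?_, ?_⟩ <;> linarith

theorem tendsto_edgeAverage (hβ : β < 1) {h : ℝ → ℝ → ℝ}
    (hcont : ∀ᶠ ε in 𝓝[>] (0 : ℝ), ContinuousOn (h ε) (Icc (1 / (1 + ε)) 1))
    (hlim : ContinuousAt (Function.uncurry h) (0, 1)) :
    Tendsto (fun ε => edgeAverage β ε (h ε)) (𝓝[>] 0) (𝓝 (h 0 1 / (1 - β))) := by
  have hmass : ∀ c : ℝ,
      Tendsto (fun ε : ℝ => c * ((1 + ε) ^ (β - 1) / (1 - β)))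
        (𝓝[>] 0) (𝓝 (c / (1 - β))) := by
    intro c
    have : ContinuousAt (fun ε : ℝ => c * ((1 + ε) ^ (β - 1) / (1 - β))) 0 := by
      fun_prop (disch := norm_num)
    simpa [div_eq_mul_inv] using this.tendsto.mono_left nhdsWithin_le_nhds
  have hpos : 0 < 1 - β := by linarith
  rw [tendsto_order]
  constructor
  · intro a ha
    obtain ⟨c, hac, hcL⟩ := exists_between ((lt_div_iff₀ hpos).1 ha)
    filter_upwards [hcont, self_mem_nhdsWithin,
      eventually_forall_Icc_of_eventually_nhds (hlim.eventually (lt_mem_nhds hcL)),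
      (hmass c).eventually (lt_mem_nhds ((lt_div_iff₀ hpos).2 hac))] with ε hcε hε hbnd hlow
    rw [← edgeAverage_const hβ hε] at hlow
    exact hlow.trans_le
      (edgeAverage_mono hβ hε continuousOn_const hcε fun s hs => (hbnd s hs).le)
  · intro a ha
    obtain ⟨c, hLc, hca⟩ := exists_between ((div_lt_iff₀ hpos).1 ha)
    filter_upwards [hcont, self_mem_nhdsWithin,
      eventually_forall_Icc_of_eventually_nhds (hlim.eventually (gt_mem_nhds hLc)),
      (hmass c).eventually (gt_mem_nhds ((div_lt_iff₀ hpos).2 hca))] with ε hcε hε hbnd hup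
    rw [← edgeAverage_const hβ hε] at hup
    exact (edgeAverage_mono hβ hε hcε continuousOn_const fun s hs => (hbnd s hs).le).trans_lt
      hup

end edgeAverage

section limits

variable {β γ : ℝ}

lemma tendsto_rpow_mul_integral_one_add_rpow_mul_one_sub_rpow (hβ : β < 1) :
    Tendsto (fun ε : ℝ => ε ^ (β - 1) *
        ∫ s in (1 / (1 + ε))..(1:ℝ), (1 + s) ^ (-γ) * (1 - s) ^ (-β))
      (𝓝[>] 0) (𝓝 (2 ^ (-γ) / (1 - β))) := by
  have hcont : ∀ᶠ ε in 𝓝[>] (0 : ℝ),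
      ContinuousOn (fun s : ℝ => (1 + s) ^ (-γ)) (Icc (1 / (1 + ε)) 1) := by
    filter_upwards [self_mem_nhdsWithin] with ε (hε : 0 < ε)
    refine ContinuousOn.rpow_const (by fun_prop) fun s hs => Or.inl ?_
    have : 0 < 1 / (1 + ε) := by positivity
    linarith [hs.1]
  have hat : ContinuousAt (fun p : ℝ × ℝ => (1 + p.2) ^ (-γ)) (0, 1) := by
    fun_prop (disch := norm_num)
  convert tendsto_edgeAverage hβ hcont hat using 1
  · funext ε
    exact congrArg _ (integral_congr fun s _ => mul_comm _ _)
  · norm_num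

lemma tendsto_rpow_mul_integral_one_add_rpow_mul_one_sub_rpow_mul_inv {x : ℝ} (hβ : β < 1)
    (hx : 1 < x) :
    Tendsto (fun ε : ℝ => ε ^ (β - 1) *
        ∫ s in (1 / (1 + ε))..(1:ℝ),
          (1 + s) ^ (-γ) * (1 - s) ^ (-β) * (x / (1 + ε) - s)⁻¹)
      (𝓝[>] 0) (𝓝 (2 ^ (-γ) * (x - 1)⁻¹ / (1 - β))) := by
  have hcont : ∀ᶠ ε in 𝓝[>] (0 : ℝ), ContinuousOn
      (fun s : ℝ => (1 + s) ^ (-γ) * (x / (1 + ε) - s)⁻¹) (Icc (1 / (1 + ε)) 1) := by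
    filter_upwards [Ioo_mem_nhdsGT (sub_pos.2 hx)] with ε ⟨hε0, hεx⟩
    have h1 : 0 < 1 / (1 + ε) := by positivity
    have hx1 : 1 < x / (1 + ε) := by rw [lt_div_iff₀ (by linarith)]; linarith
    refine (ContinuousOn.rpow_const (by fun_prop) fun s hs => Or.inl ?_).mul
      ((continuousOn_const.sub continuousOn_id).inv₀ fun s hs => (sub_pos.2 ?_).ne')
    · linarith [hs.1]
    · show s < x / (1 + ε)
      linarith [hs.2]
  have hat : ContinuousAt
      (fun p : ℝ × ℝ => (1 + p.2) ^ (-γ) * (x / (1 + p.1) - p.2)⁻¹) (0, 1) := by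
    have : x - 1 ≠ 0 := by linarith
    fun_prop (disch := simp [this])
  convert tendsto_edgeAverage hβ hcont hat using 1
  · funext ε
    exact congrArg _ (integral_congr fun s _ => by ring)
  · norm_num

end limits

lemma intervalIntegrable_psiRho {α ρ b : ℝ} (hβ : 0 < α * (1 - ρ)) (hb : 1 ≤ b) :
    IntervalIntegrable (psiRho α ρ) volume 1 b := by
  have hsing : IntervalIntegrable (fun u : ℝ => (u - 1) ^ (α * (1 - ρ) - 1)) volume 1 b := by
    simpa using (intervalIntegrable_rpow' (a := 0) (b := b - 1)
      (show (-1 : ℝ) < α * (1 - ρ) - 1 by linarith)).comp_sub_right 1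
  refine hsing.mul_continuousOn (ContinuousOn.rpow_const (by fun_prop) fun u hu => Or.inl ?_)
  rw [uIcc_of_le hb] at hu
  linarith [hu.1]

lemma continuousAt_integral_psiRho {α ρ x : ℝ} (hβ : 0 < α * (1 - ρ)) (hx : 1 < x) :
    ContinuousAt (fun y => ∫ u in (1:ℝ)..y, psiRho α ρ u) x := by
  have hint := intervalIntegrable_psiRho hβ (b := x + 1) (by linarith)
  refine (continuousOn_primitive_interval' hint left_mem_uIcc).continuousAt ?_
  rw [uIcc_of_le (by linarith)]
  exact Icc_mem_nhds hx (by linarith)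

lemma mul_psiRho_eq {α ρ x : ℝ} (hx : 1 < x) :
    (x + 1) * psiRho α ρ x = (x + 1) ^ (α * ρ) * (x - 1) ^ (α * (1 - ρ)) * (x - 1)⁻¹ := by
  rw [psiRho, rpow_sub_one (by linarith), rpow_sub_one (by linarith)]
  have : x + 1 ≠ 0 := by linarith
  field_simp

theorem stmt_16_general (α ρ : ℝ) (hα1 : 1 ≤ α) (hρ1 : ρ < 1)
    (hαρh : α * (1 - ρ) < 1)
    (x : ℝ) (hx : 1 < x) :
    Tendsto (fun ε : ℝ =>
        ε ^ (α * (1 - ρ) - 1) *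
          ((x / (1 + ε) + 1) ^ (α * ρ) * (x / (1 + ε) - 1) ^ (α * (1 - ρ)) *
              (∫ s in (1 / (1 + ε))..(1:ℝ),
                (1 + s) ^ (-(α * ρ)) * (1 - s) ^ (-(α * (1 - ρ))) * (x / (1 + ε) - s)⁻¹)
            - (α - 1) * (∫ u in (1:ℝ)..(x / (1 + ε)), psiRho α ρ u) *
                ∫ s in (1 / (1 + ε))..(1:ℝ),
                  (1 + s) ^ (-(α * ρ)) * (1 - s) ^ (-(α * (1 - ρ)))))
      (𝓝[>] (0:ℝ))
      (𝓝 ((2 ^ (-(α * ρ)) / (1 - α * (1 - ρ))) *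
        ((x + 1) * psiRho α ρ x - (α - 1) * ∫ u in (1:ℝ)..x, psiRho α ρ u))) := by
  have hβ : 0 < α * (1 - ρ) := mul_pos (by linarith) (by linarith)
  have hxε : Tendsto (fun ε : ℝ => x / (1 + ε)) (𝓝[>] 0) (𝓝 x) := by
    have : ContinuousAt (fun ε : ℝ => x / (1 + ε)) 0 := by fun_prop (disch := norm_num)
    simpa using this.tendsto.mono_left nhdsWithin_le_nhds
  have hprefactor := ((hxε.add_const 1).rpow_const (p := α * ρ) (Or.inl (by linarith))).mul
    ((hxε.sub_const 1).rpow_const (p := α * (1 - ρ)) (Or.inl (by linarith)))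
  have hprimitive := (continuousAt_integral_psiRho hβ hx).tendsto.comp hxε
  have hsingular := tendsto_rpow_mul_integral_one_add_rpow_mul_one_sub_rpow_mul_inv
    (γ := α * ρ) hαρh hx
  have hmass := tendsto_rpow_mul_integral_one_add_rpow_mul_one_sub_rpow (γ := α * ρ) hαρh
  have hlim := (hprefactor.mul hsingular).sub ((hprimitive.const_mul (α - 1)).mul hmass)
  rw [mul_psiRho_eq hx]
  convert hlim using 1
  · funext ε
    simp only [Function.comp]
    ring
  · congr 1; ring

/-- Proposition 3.6 (analytic content, `α ∈ [1,2)`): for `x > 1`, as `ε → 0⁺`,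
`ε^{αρ̂−1}·[ (x/(1+ε)+1)^{αρ}(x/(1+ε)−1)^{αρ̂}·∫_{1/(1+ε)}^1 (1+s)^{−αρ}(1−s)^{−αρ̂}(x/(1+ε)−s)^{−1} ds
  − (α−1)·(∫₁^{x/(1+ε)} ψ_{αρ}) · ∫_{1/(1+ε)}^1 (1+s)^{−αρ}(1−s)^{−αρ̂} ds ]
  → (2^{−αρ}/(1−αρ̂))·[ (x+1)ψ_{αρ}(x) − (α−1)∫₁^x ψ_{αρ} ]`. -/
theorem stmt_16 (α ρ : ℝ) (hα1 : 1 ≤ α) (hα2 : α < 2) (hρ0 : 0 < ρ) (hρ1 : ρ < 1)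
    (hαρ : α * ρ < 1) (hαρh : α * (1 - ρ) < 1)
    (x : ℝ) (hx : 1 < x) :
    Tendsto (fun ε : ℝ =>
        ε ^ (α * (1 - ρ) - 1) *
          ((x / (1 + ε) + 1) ^ (α * ρ) * (x / (1 + ε) - 1) ^ (α * (1 - ρ)) *
              (∫ s in (1 / (1 + ε))..(1:ℝ),
                (1 + s) ^ (-(α * ρ)) * (1 - s) ^ (-(α * (1 - ρ))) * (x / (1 + ε) - s)⁻¹)
            - (α - 1) * (∫ u in (1:ℝ)..(x / (1 + ε)), psiRho α ρ u) *
                ∫ s in (1 / (1 + ε))..(1:ℝ),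
                  (1 + s) ^ (-(α * ρ)) * (1 - s) ^ (-(α * (1 - ρ)))))
      (𝓝[>] (0:ℝ))
      (𝓝 ((2 ^ (-(α * ρ)) / (1 - α * (1 - ρ))) *
        ((x + 1) * psiRho α ρ x - (α - 1) * ∫ u in (1:ℝ)..x, psiRho α ρ u))) :=
  stmt_16_general α ρ hα1 hρ1 hαρh x hx
end
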